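/- Let G = C(α₁,...,α_{2k}) with k ≥ 2 and α_{2k} ≥ 2. Then 0 is an eigenvalue of ε(G) with multiplicity at least (α₁ + α₃ + ... + α_{2k-1}) - k. -/

import Mathlib

/-!
Every vertex of `G = C(α₁,…,α_{2k})` has eccentricity `2`: any two non-adjacent vertices have a
common neighbour in the last block or in the first one, and every vertex has a non-neighbour (this
is where `k ≥ 2` and `α_{2k} ≥ 2` enter). Hence `ε(G)` is twice the adjacency matrix of the
complement of `G`. Each odd block `V_{2j-1}` (a block `i` with `i` even in the 0-based indexing used
below) is a clique of vertices with equal neighbourhoods outside it, so all columns of `ε(G)`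
indexed by `V_{2j-1}` coincide. Fixing one vertex `x₀` in each odd block, the vectors `e_x - e_{x₀}`
give `∑ (α_{2j-1} - 1) ≥ ∑ α_{2j-1} - k` independent vectors in the kernel.
-/

open Finset Matrix

/-- The cograph `C(α₁,…,α_l)` obtained by the recursive construction
`C(α₁) = complement of K_{α₁}` and
`C(α₁,…,αᵢ) = complement of (C(α₁,…,αᵢ₋₁) ⊔ K_{αᵢ})`,
presented by its resulting explicit adjacency relation: two distinct vertices
in the same (0-based) block `i` are adjacent iff `l - 1 - i` is odd, and
vertices in different blocks `a < b` are adjacent iff `l - 1 - b` is even. -/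
def Cgraph (l : ℕ) (α : Fin l → ℕ) : SimpleGraph (Σ i : Fin l, Fin (α i)) where
  Adj u v := u ≠ v ∧ ((u.1 = v.1 ∧ Odd (l - 1 - u.1.val)) ∨
      (u.1 ≠ v.1 ∧ Even (l - 1 - max u.1.val v.1.val)))
  symm := by
    constructor
    rintro u v ⟨h1, h2⟩
    refine ⟨h1.symm, ?_⟩
    rcases h2 with ⟨he, ho⟩ | ⟨hne, hev⟩
    · exact Or.inl ⟨he.symm, he ▸ ho⟩
    · exact Or.inr ⟨hne.symm, by rwa [max_comm]⟩
  loopless := by constructor; rintro u ⟨h, -⟩; exact h rfl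

/-- The eccentricity of a vertex: the largest distance from it to any vertex. -/
noncomputable def ecc {V : Type*} [Fintype V] (G : SimpleGraph V) (v : V) : ℕ :=
  Finset.univ.sup fun u => G.dist v u

/-- The eccentricity matrix: entry `d(u,v)` if `d(u,v) = min (e u) (e v)`, else `0`. -/
noncomputable def eccMatrix {V : Type*} [Fintype V] (G : SimpleGraph V) :
    Matrix V V ℝ :=
  Matrix.of fun u v =>
    if G.dist u v = min (ecc G u) (ecc G v) then (G.dist u v : ℝ) else 0

/-- Geometric multiplicity of `μ` as an eigenvalue of `M`. -/
noncomputable def eigMult {n : Type*} [Fintype n] [DecidableEq n]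
    (M : Matrix n n ℝ) (μ : ℝ) : ℕ :=
  Module.finrank ℝ (LinearMap.ker (Matrix.toLin' (M - μ • (1 : Matrix n n ℝ))))

namespace SimpleGraph

variable {V : Type*} {G : SimpleGraph V}

lemma dist_eq_two_of_adj_of_adj {u v w : V} (hne : u ≠ v) (hnadj : ¬G.Adj u v)
    (huw : G.Adj u w) (hwv : G.Adj w v) : G.dist u v = 2 := by
  have hle : G.dist u v ≤ 2 := by simpa using G.dist_le (huw.toWalk.append hwv.toWalk)
  have h0 : G.dist u v ≠ 0 :=
    dist_ne_zero_iff_ne_and_reachable.mpr ⟨hne, (huw.toWalk.append hwv.toWalk).reachable⟩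
  have h1 : G.dist u v ≠ 1 := fun h => hnadj (dist_eq_one_iff_adj.mp h)
  omega

lemma dist_le_two_of_exists_common_adj
    (hcn : ∀ u v, u ≠ v → ¬G.Adj u v → ∃ w, G.Adj u w ∧ G.Adj w v) (u v : V) : G.dist u v ≤ 2 := by
  by_cases hne : u = v
  · simp [hne]
  by_cases hadj : G.Adj u v
  · simp [dist_eq_one_iff_adj.mpr hadj]
  obtain ⟨w, huw, hwv⟩ := hcn u v hne hadj
  exact (dist_eq_two_of_adj_of_adj hne hadj huw hwv).le

lemma dist_eq_two_iff_of_exists_common_adj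
    (hcn : ∀ u v, u ≠ v → ¬G.Adj u v → ∃ w, G.Adj u w ∧ G.Adj w v) {u v : V} :
    G.dist u v = 2 ↔ u ≠ v ∧ ¬G.Adj u v := by
  refine ⟨fun h => ⟨?_, fun hadj => ?_⟩, fun ⟨hne, hadj⟩ => ?_⟩
  · rintro rfl; simp at h
  · simp [dist_eq_one_iff_adj.mpr hadj] at h
  · obtain ⟨w, huw, hwv⟩ := hcn u v hne hadj
    exact dist_eq_two_of_adj_of_adj hne hadj huw hwv

lemma ecc_eq_two_of_exists_common_adj [Fintype V]
    (hcn : ∀ u v, u ≠ v → ¬G.Adj u v → ∃ w, G.Adj u w ∧ G.Adj w v) {u : V}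
    (hfar : ∃ v, u ≠ v ∧ ¬G.Adj u v) :
    ecc G u = 2 := by
  obtain ⟨v, hne, hadj⟩ := hfar
  refine le_antisymm (Finset.sup_le fun v _ => dist_le_two_of_exists_common_adj hcn u v) ?_
  calc 2 = G.dist u v := ((dist_eq_two_iff_of_exists_common_adj hcn).mpr ⟨hne, hadj⟩).symm
    _ ≤ ecc G u := Finset.le_sup (Finset.mem_univ v)

lemma eccMatrix_apply_of_exists_common_adj [Fintype V] [DecidableRel G.Adj] [DecidableEq V]
    (hcn : ∀ u v, u ≠ v → ¬G.Adj u v → ∃ w, G.Adj u w ∧ G.Adj w v)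
    (hfar : ∀ u, ∃ v, u ≠ v ∧ ¬G.Adj u v) (u v : V) :
    eccMatrix G u v = if u ≠ v ∧ ¬G.Adj u v then 2 else 0 := by
  have hdist := dist_eq_two_iff_of_exists_common_adj hcn (u := u) (v := v)
  simp only [eccMatrix, of_apply, ecc_eq_two_of_exists_common_adj hcn (hfar u),
    ecc_eq_two_of_exists_common_adj hcn (hfar v), min_self, hdist]
  split_ifs with h
  · rw [hdist.mpr h, Nat.cast_ofNat]
  · rfl

end SimpleGraph

namespace Matrix

variable {K m n ι : Type*} [Field K] [Fintype n] [DecidableEq n] [Fintype ι]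

/-- The kernel vectors `Pi.single (e t) 1 - Pi.single (b t) 1` are independent because their
restrictions to `range e` form the standard basis. -/
lemma card_le_finrank_ker_toLin'_of_col_eq (M : Matrix m n K) {e b : ι → n}
    (he : Function.Injective e) (hb : ∀ t t', b t ≠ e t') (hcol : ∀ t u, M u (e t) = M u (b t)) :
    Fintype.card ι ≤ Module.finrank K (LinearMap.ker (toLin' M)) := by
  classical
  set w : ι → n → K := fun t => Pi.single (e t) 1 - Pi.single (b t) 1
  have hw : LinearIndependent K w := by
    refine LinearIndependent.of_comp (LinearMap.funLeft K K e) ?_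
    convert (Pi.basisFun K ι).linearIndependent
    ext t t'
    simp [w, LinearMap.funLeft, Pi.single_apply, he.eq_iff, fun t t' => (hb t t').symm]
  have hker : Submodule.span K (Set.range w) ≤ LinearMap.ker (toLin' M) := by
    refine Submodule.span_le.mpr (Set.range_subset_iff.mpr fun t => ?_)
    ext u
    simp [w, mulVec_sub, mulVec_single, hcol]
  calc Fintype.card ι = Module.finrank K (Submodule.span K (Set.range w)) :=
        (finrank_span_eq_card hw).symm
    _ ≤ _ := Submodule.finrank_mono hker

end Matrix

namespace Cgraph

variable {l : ℕ} {α : Fin l → ℕ}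

lemma adj_iff {u v : Σ i : Fin l, Fin (α i)} :
    (Cgraph l α).Adj u v ↔ u ≠ v ∧ ((u.1 = v.1 ∧ (l - 1 - u.1.val) % 2 = 1) ∨
      (u.1 ≠ v.1 ∧ (l - 1 - max u.1.val v.1.val) % 2 = 0)) := by
  simp [Cgraph, Nat.odd_iff, Nat.even_iff]

lemma adj_of_fst_ne {u v : Σ i : Fin l, Fin (α i)} (h : u.1.val ≠ v.1.val)
    (hmax : (l - 1 - max u.1.val v.1.val) % 2 = 0) : (Cgraph l α).Adj u v :=
  adj_iff.mpr ⟨fun huv => h (by rw [huv]), .inr ⟨fun h' => h (by rw [h']), hmax⟩⟩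

/-- A vertex of the last block is adjacent to everything outside it, and block `0` is
adjacent to the last block. -/
lemma exists_common_adj (hl : 2 ≤ l) (hα : ∀ i, 1 ≤ α i) (u v : Σ i : Fin l, Fin (α i))
    (hnadj : ¬(Cgraph l α).Adj u v) :
    ∃ w, (Cgraph l α).Adj u w ∧ (Cgraph l α).Adj w v := by
  have hu := u.1.isLt
  have hv := v.1.isLt
  by_cases hul : u.1.val = l - 1 <;> by_cases hvl : v.1.val = l - 1
  · refine ⟨⟨⟨0, by omega⟩, ⟨0, hα _⟩⟩, adj_of_fst_ne ?_ ?_, adj_of_fst_ne ?_ ?_⟩ <;>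
      simp only <;> omega
  · exact absurd (adj_of_fst_ne (by omega) (by omega)) hnadj
  · exact absurd (adj_of_fst_ne (by omega) (by omega)) hnadj
  · refine ⟨⟨⟨l - 1, by omega⟩, ⟨0, hα _⟩⟩, adj_of_fst_ne ?_ ?_, adj_of_fst_ne ?_ ?_⟩ <;>
      simp only <;> omega

lemma exists_ne_not_adj (hl : 3 ≤ l) (hα : ∀ i, 1 ≤ α i) (j : Fin l) (hj : j.val = l - 1)
    (hlast : 2 ≤ α j) (u : Σ i : Fin l, Fin (α i)) :
    ∃ v, u ≠ v ∧ ¬(Cgraph l α).Adj u v := by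
  obtain ⟨i, x⟩ := u
  by_cases hil : i = j
  · subst hil
    have : Nontrivial (Fin (α i)) := Fin.nontrivial_iff_two_le.mpr hlast
    obtain ⟨y, hy⟩ := exists_ne x
    refine ⟨⟨i, y⟩, fun h => hy (eq_of_heq (Sigma.mk.inj_iff.mp h).2).symm, ?_⟩
    rw [adj_iff]
    rintro ⟨-, ⟨-, hodd⟩ | ⟨hne, -⟩⟩
    · simp only at hodd
      omega
    · exact hne rfl
  · have hi : i.val < l - 1 := by have := i.isLt; omega
    obtain ⟨b, hbl, hbi, hmax⟩ : ∃ b < l, b ≠ i.val ∧ (l - 1 - max i.val b) % 2 = 1 := by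
      by_cases hpar : (l - 1 - i.val) % 2 = 0
      · exact ⟨i.val + 1, by omega, by omega, by omega⟩
      by_cases hi0 : i.val = 0
      · exact ⟨l - 2, by omega, by omega, by omega⟩
      · exact ⟨0, by omega, by omega, by omega⟩
    refine ⟨⟨⟨b, hbl⟩, ⟨0, hα _⟩⟩, fun h => hbi (congrArg (fun w => w.1.val) h).symm, ?_⟩
    rw [adj_iff]
    rintro ⟨-, ⟨heq, -⟩ | ⟨-, heven⟩⟩
    · exact hbi (congrArg Fin.val heq).symm
    · simp only at heven
      omega

/-- A block `i` with `l - 1 - i` odd is a clique of vertices with equal neighbourhoods outside it. -/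
lemma ne_and_not_adj_iff {i : Fin l} (hi : (l - 1 - i.val) % 2 = 1)
    (u : Σ i : Fin l, Fin (α i)) (a : Fin (α i)) :
    (u ≠ ⟨i, a⟩ ∧ ¬(Cgraph l α).Adj u ⟨i, a⟩) ↔
      (u.1 ≠ i ∧ (l - 1 - max u.1.val i.val) % 2 = 1) := by
  rw [adj_iff]
  by_cases hui : u.1 = i
  · simp [hui, hi]
  · have hne : u ≠ ⟨i, a⟩ := fun h => hui (by rw [h])
    simp only [hne, hui, ne_eq, not_false_eq_true, true_and, false_and, false_or]
    omega

lemma eccMatrix_apply_eq (hl : 3 ≤ l) (hα : ∀ i, 1 ≤ α i) (j : Fin l) (hj : j.val = l - 1)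
    (hlast : 2 ≤ α j) {i : Fin l} (hi : (l - 1 - i.val) % 2 = 1) (a b : Fin (α i))
    (u : Σ i : Fin l, Fin (α i)) :
    eccMatrix (Cgraph l α) u ⟨i, a⟩ = eccMatrix (Cgraph l α) u ⟨i, b⟩ := by
  classical
  have hcn := fun u v (_ : u ≠ v) => exists_common_adj (by omega) hα u v
  simp only [SimpleGraph.eccMatrix_apply_of_exists_common_adj hcn
    (exists_ne_not_adj hl hα j hj hlast), ne_and_not_adj_iff hi]

end Cgraph

lemma card_filter_val_mod_two_eq_zero_le (k : ℕ) :
    #{i : Fin (2 * k) | i.val % 2 = 0} ≤ k := by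
  simpa using card_le_card_of_injOn (t := (univ : Finset (Fin k)))
    (fun i : Fin (2 * k) => ⟨i.val / 2, by omega⟩) (fun _ _ => mem_univ _)
    (fun x hx y hy hxy => by
      simp only [coe_filter, mem_univ, true_and, Set.mem_ofPred_eq, Fin.mk.injEq] at hx hy hxy
      omega)

lemma sum_tsub_card_le_sum_pred {ι : Type*} (s : Finset ι) (a : ι → ℕ) :
    ∑ i ∈ s, a i - #s ≤ ∑ i ∈ s, (a i - 1) := by
  have : ∑ i ∈ s, a i ≤ ∑ i ∈ s, (a i - 1) + #s := by
    rw [card_eq_sum_ones, ← sum_add_distrib]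
    exact sum_le_sum fun i _ => by omega
  omega

/-- For `G = C(α₁,…,α_{2k})` with `k ≥ 2`, `α_{2k} ≥ 2`, `0` is an eigenvalue
of `ε(G)` with multiplicity at least `α₁ + α₃ + ⋯ + α_{2k-1} - k` (odd-indexed
blocks of the paper are the 0-based even indices here). -/
theorem stmt5 (k : ℕ) (hk : 2 ≤ k) (α : Fin (2*k) → ℕ) (hα : ∀ i, 1 ≤ α i)
    (j : Fin (2*k)) (hj : j.val = 2*k - 1) (hlast : 2 ≤ α j) :
    (∑ i ∈ Finset.univ.filter (fun i : Fin (2*k) => i.val % 2 = 0), α i) - k ≤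
      eigMult (eccMatrix (Cgraph (2*k) α)) 0 := by
  set s := univ.filter fun i : Fin (2 * k) => i.val % 2 = 0
  let e : (Σ i : s, Fin (α i - 1)) → Σ i, Fin (α i) := fun t => ⟨t.1, ⟨t.2 + 1, by omega⟩⟩
  let b : (Σ i : s, Fin (α i - 1)) → Σ i, Fin (α i) := fun t => ⟨t.1, ⟨0, hα t.1⟩⟩
  have he : Function.Injective e := by
    rintro ⟨i, x⟩ ⟨i', x'⟩ h
    obtain ⟨hii', hxx'⟩ := Sigma.mk.inj_iff.mp h
    obtain rfl := Subtype.ext hii'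
    simpa [Fin.ext_iff] using hxx'
  have hb (t t') : b t ≠ e t' := fun h => by simpa [b, e] using congrArg (fun v => v.2.val) h
  have hcol (t : Σ i : s, Fin (α i - 1)) u : eccMatrix (Cgraph (2 * k) α) u (e t) =
      eccMatrix (Cgraph (2 * k) α) u (b t) := by
    have hi := (mem_filter.mp t.1.2).2
    exact Cgraph.eccMatrix_apply_eq (by omega) hα j hj hlast (by omega) _ _ u
  calc ∑ i ∈ s, α i - k ≤ ∑ i ∈ s, (α i - 1) :=
        (tsub_le_tsub_left (card_filter_val_mod_two_eq_zero_le k) _).trans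
          (sum_tsub_card_le_sum_pred s α)
    _ = Fintype.card (Σ i : s, Fin (α i - 1)) := by
      simp only [Fintype.card_sigma, Fintype.card_fin, sum_coe_sort s fun i => α i - 1]
    _ ≤ eigMult (eccMatrix (Cgraph (2 * k) α)) 0 := by
      rw [eigMult, zero_smul, sub_zero]
      exact Matrix.card_le_finrank_ker_toLin'_of_col_eq _ he hb hcol
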